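/- arXiv:2009.11071 — 2 statements merged into one kernel-verified Lean document; each statement's English description precedes it below -/
import Mathlib

section
/- Let A₀, A₁ be n×n real matrices, λ ∈ [0,1], β ∈ (0,1), and define 𝓛(X) = λA₁XA₁ᵀ + (1-λ)A₀XA₀ᵀ for n×n real matrices X. Suppose there exists a symmetric positive definite matrix Ξ such that Ξ - β·𝓛(Ξ) is positive definite. Let W and X₀ be positive semidefinite n×n matrices and define X_{i+1} = 𝓛(X_i) + W. Then the series ∑_{i=0}^∞ β^i X_i converges entrywise absolutely (i.e., the matrix-valued family (β^i X_i)_{i∈ℕ} is summable). -/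
/-!
The certificate says `β 𝓛(Ξ) < Ξ` in the Loewner order; by compactness of the unit sphere this
strict inequality upgrades to `β 𝓛(Ξ) ≤ r Ξ` for some `r < 1`, and similarly `X₀ ≤ a Ξ`,
`W ≤ b Ξ`. Since `𝓛` is monotone and homogeneous, induction gives
`0 ≤ βⁱ Xᵢ ≤ (a + b i) ρⁱ Ξ` with `ρ = max r β < 1`. An entry of a positive semidefinite matrix
is bounded by its diagonal entries, so every entry of `βⁱ Xᵢ` is dominated by a summable sequence.
-/

open Matrix
open scoped MatrixOrder

theorem Monotone.le_affine_mul_pow_smul {E : Type*} [AddCommGroup E] [PartialOrder E]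
    [IsOrderedAddMonoid E] [Module ℝ E] [PosSMulMono ℝ E] {T : E → E} (hT : Monotone T)
    (hT_smul : ∀ (c : ℝ) x, T (c • x) = c • T x) {ξ : E} {r a b : ℝ} (hr : 0 ≤ r) (ha : 0 ≤ a)
    (hb : 0 ≤ b) (hTξ : T ξ ≤ r • ξ) {w : E} (hw : w ≤ b • ξ) {Y : ℕ → E} (hY0 : Y 0 ≤ a • ξ)
    (hY : ∀ i, Y (i + 1) ≤ T (Y i) + r ^ (i + 1) • w) (i : ℕ) :
    Y i ≤ ((a + b * i) * r ^ i) • ξ := by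
  induction i with
  | zero => simpa using hY0
  | succ i ih =>
    have hm : 0 ≤ (a + b * i) * r ^ i := by positivity
    calc Y (i + 1) ≤ T (Y i) + r ^ (i + 1) • w := hY i
      _ ≤ ((a + b * i) * r ^ i) • T ξ + r ^ (i + 1) • (b • ξ) := by
          rw [← hT_smul]; gcongr; exact hT ih
      _ ≤ ((a + b * i) * r ^ i) • (r • ξ) + r ^ (i + 1) • (b • ξ) := by gcongr
      _ = ((a + b * ↑(i + 1)) * r ^ (i + 1)) • ξ := by
          rw [smul_smul, smul_smul, ← add_smul]; push_cast; ring_nf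

theorem summable_affine_mul_geometric {r : ℝ} (hr0 : 0 ≤ r) (hr1 : r < 1) (a b : ℝ) :
    Summable fun i : ℕ => (a + b * i) * r ^ i := by
  have hgeom := (summable_geometric_of_lt_one hr0 hr1).mul_left a
  have hlin := (summable_pow_mul_geometric_of_norm_lt_one 1
    (by rwa [Real.norm_eq_abs, abs_of_nonneg hr0])).mul_left b
  simpa only [pow_one, add_mul, mul_assoc] using hgeom.add hlin

namespace Matrix

variable {n : Type*} [Fintype n]

theorem PosSemidef.two_mul_abs_apply_le {M : Matrix n n ℝ} (hM : M.PosSemidef) (j k : n) :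
    2 * |M j k| ≤ M j j + M k k := by
  classical
  have hsymm : M k j = M j k := by simpa using hM.1.apply j k
  have quad (s : ℝ) : 0 ≤ M j j + 2 * s * M j k + s ^ 2 * M k k := by
    have := hM.dotProduct_mulVec_nonneg (Pi.single j 1 + s • Pi.single k 1)
    simp only [star_trivial, mulVec_add, mulVec_single, MulOpposite.op_one, one_smul, mulVec_smul,
      dotProduct_add, add_dotProduct, single_dotProduct, col_apply, one_mul, smul_dotProduct, hsymm,
      smul_eq_mul, dotProduct_smul] at this
    linarith
  cases abs_cases (M j k) <;> nlinarith [quad 1, quad (-1)]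

theorem summable_of_nonneg_of_le_smul {ι : Type*} {Y : ι → Matrix n n ℝ} {Z : Matrix n n ℝ}
    {c : ι → ℝ} (hY : ∀ i, 0 ≤ Y i) (hYZ : ∀ i, Y i ≤ c i • Z) (hc : Summable c) :
    Summable Y := by
  refine Pi.summable.2 fun j => Pi.summable.2 fun k =>
    .of_norm_bounded (hc.mul_right ((Z j j + Z k k) / 2)) fun i => ?_
  have hjk := (hY i).posSemidef.two_mul_abs_apply_le j k
  have hj := (le_iff.1 (hYZ i)).diag_nonneg (i := j)
  have hk := (le_iff.1 (hYZ i)).diag_nonneg (i := k)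
  simp only [sub_apply, smul_apply, smul_eq_mul, sub_nonneg] at hj hk
  rw [Real.norm_eq_abs]
  linarith

theorem PosDef.exists_dotProduct_mulVec_le {A : Matrix n n ℝ} (hA : A.PosDef)
    (M : Matrix n n ℝ) : ∃ C, ∀ x, x ⬝ᵥ M *ᵥ x ≤ C * (x ⬝ᵥ A *ᵥ x) := by
  have hpos {x : n → ℝ} (hx : x ≠ 0) : 0 < x ⬝ᵥ A *ᵥ x := by
    simpa using hA.dotProduct_mulVec_pos hx
  set q : (n → ℝ) → ℝ := fun x => (x ⬝ᵥ M *ᵥ x) / (x ⬝ᵥ A *ᵥ x)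
  have hq : ContinuousOn q (Metric.sphere 0 1) := .div (by fun_prop) (by fun_prop)
    fun x hx => (hpos (ne_zero_of_mem_unit_sphere ⟨x, hx⟩)).ne'
  obtain ⟨C, hC⟩ := (isCompact_sphere (0 : n → ℝ) 1).bddAbove_image hq
  refine ⟨C, fun x => ?_⟩
  rcases eq_or_ne x 0 with rfl | hx
  · simp
  have hy : ‖x‖⁻¹ • x ∈ Metric.sphere (0 : n → ℝ) 1 := by simp [norm_smul, hx]
  -- `q` is invariant under scaling, so its bound on the unit sphere holds everywhere
  have hqy : q (‖x‖⁻¹ • x) = q x := by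
    simp only [q, mulVec_smul, dotProduct_smul, smul_dotProduct, smul_eq_mul, ← mul_assoc]
    exact mul_div_mul_left _ _ (by positivity)
  rw [← div_le_iff₀ (hpos hx)]
  exact (hqy ▸ hC ⟨_, hy, rfl⟩ : q x ≤ C)

theorem PosDef.exists_le_smul {A M : Matrix n n ℝ} (hA : A.PosDef) (hM : M.IsHermitian) :
    ∃ C : ℝ, 0 < C ∧ M ≤ C • A := by
  obtain ⟨C, hC⟩ := hA.exists_dotProduct_mulVec_le M
  refine ⟨max C 1, by positivity, ?_⟩
  refine .of_dotProduct_mulVec_nonneg ((hA.1.smul (.all _)).sub hM) fun x => ?_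
  have hAx : 0 ≤ x ⬝ᵥ A *ᵥ x := by simpa using hA.posSemidef.dotProduct_mulVec_nonneg x
  have := mul_le_mul_of_nonneg_right (le_max_left C 1) hAx
  simp only [star_trivial, sub_mulVec, smul_mulVec, dotProduct_sub, dotProduct_smul, smul_eq_mul]
  linarith [hC x]

theorem PosDef.exists_lt_one_le_smul {A B : Matrix n n ℝ} (hA : A.PosDef)
    (hAB : (A - B).PosDef) : ∃ r : ℝ, r < 1 ∧ B ≤ r • A := by
  obtain ⟨C, hC, hle⟩ := hAB.exists_le_smul hA.1
  refine ⟨1 - C⁻¹, by simpa using hC, ?_⟩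
  have : C⁻¹ • A ≤ A - B := by
    simpa [smul_smul, inv_mul_cancel₀ hC.ne'] using
      smul_le_smul_of_nonneg_left hle (inv_nonneg.2 hC.le)
  rw [sub_smul, one_smul]
  exact le_sub_comm.mp this

theorem monotone_mul_mul_transpose (A : Matrix n n ℝ) : Monotone fun X => A * X * Aᵀ := by
  intro X Y h
  simpa only [star_eq_conjTranspose, conjTranspose_eq_transpose_of_trivial] using
    star_right_conjugate_le_conjugate h A

end Matrix

/-- Under a Lyapunov certificate of mean-square stability of `β^{1/2}`-scaled dynamics,
the discounted sum `∑ β^i X_i` of the affine recursion `X_{i+1} = 𝓛(X_i) + W` is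
well defined (the family `(β^i X_i)` is summable). -/
theorem stmt14 (n : ℕ) (A₀ A₁ : Matrix (Fin n) (Fin n) ℝ)
    (lam : ℝ) (hlam0 : 0 ≤ lam) (hlam1 : lam ≤ 1)
    (β : ℝ) (hβ0 : 0 < β) (hβ1 : β < 1)
    (L : Matrix (Fin n) (Fin n) ℝ → Matrix (Fin n) (Fin n) ℝ)
    (hL : ∀ X, L X = lam • (A₁ * X * A₁ᵀ) + (1 - lam) • (A₀ * X * A₀ᵀ))
    (Ξ : Matrix (Fin n) (Fin n) ℝ) (hΞ : Ξ.PosDef)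
    (hlyap : (Ξ - β • L Ξ).PosDef)
    (W X₀ : Matrix (Fin n) (Fin n) ℝ) (hW : W.PosSemidef) (hX₀ : X₀.PosSemidef)
    (X : ℕ → Matrix (Fin n) (Fin n) ℝ)
    (hX0 : X 0 = X₀) (hXrec : ∀ i, X (i + 1) = L (X i) + W) :
    Summable (fun i => β ^ i • X i) := by
  have hL_mono : Monotone L := by
    rw [funext hL]
    exact ((monotone_mul_mul_transpose A₁).const_smul hlam0).add
      ((monotone_mul_mul_transpose A₀).const_smul (sub_nonneg.2 hlam1))
  have hL_smul (c : ℝ) (Y) : L (c • Y) = c • L Y := by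
    simp only [hL, Matrix.mul_smul, Matrix.smul_mul, smul_add, smul_comm c]
  have hX_nonneg (i : ℕ) : 0 ≤ X i := by
    induction i with
    | zero => exact hX0 ▸ hX₀.nonneg
    | succ i ih => exact hXrec i ▸ add_nonneg (by simpa [hL] using hL_mono ih) hW.nonneg
  obtain ⟨r, hr1, hrΞ⟩ := hΞ.exists_lt_one_le_smul hlyap
  obtain ⟨a, ha, haΞ⟩ := hΞ.exists_le_smul hX₀.1
  obtain ⟨b, hb, hbΞ⟩ := hΞ.exists_le_smul hW.1
  set ρ := max r β
  have hρ0 : 0 ≤ ρ := hβ0.le.trans (le_max_right _ _)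
  have hρΞ : β • L Ξ ≤ ρ • Ξ :=
    hrΞ.trans (smul_le_smul_of_nonneg_right (le_max_left _ _) hΞ.posSemidef.nonneg)
  have hstep (i : ℕ) : β ^ (i + 1) • X (i + 1) ≤ β • L (β ^ i • X i) + ρ ^ (i + 1) • W := by
    rw [hXrec, smul_add, hL_smul, smul_smul, ← pow_succ']
    exact add_le_add_right (smul_le_smul_of_nonneg_right
      (pow_le_pow_left₀ hβ0.le (le_max_right _ _) _) hW.nonneg) _
  have hbound := (hL_mono.const_smul hβ0.le).le_affine_mul_pow_smul
    (fun c Y => by simp only [hL_smul, smul_comm β c]) hρ0 ha.le hb.le hρΞ hbΞ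
    (Y := fun i => β ^ i • X i) (by simpa [hX0] using haΞ) hstep
  exact summable_of_nonneg_of_le_smul (fun i => smul_nonneg (by positivity) (hX_nonneg i)) hbound
    (summable_affine_mul_geometric hρ0 (max_lt hr1 hβ1) a b)
end

section
/- Let A₀, A₁ be n×n real matrices, λ ∈ [0,1], and define 𝓛(X) = λA₁XA₁ᵀ + (1-λ)A₀XA₀ᵀ for n×n real matrices X. Suppose there exists a symmetric positive definite matrix Ξ such that Ξ - 𝓛(Ξ) is positive definite. Then for every positive semidefinite n×n matrix X, the iterates 𝓛^k(X) converge to the zero matrix as k → ∞. -/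
/-!
The operator `𝓛` is linear and maps positive semidefinite matrices to positive semidefinite
ones, hence is monotone for the Loewner order. Since `Ξ ≻ 0`, the certificate `Ξ - 𝓛 Ξ ≻ 0`
dominates a positive multiple of `Ξ`, which gives `𝓛 Ξ ⪯ ρ Ξ` for some `ρ ∈ [0, 1)`; and any
`X ⪰ 0` satisfies `X ⪯ c Ξ` for some `c ≥ 0`. Monotonicity then sandwiches
`0 ⪯ 𝓛^k X ⪯ c ρ^k Ξ`, and a positive semidefinite matrix is controlled entrywise by its diagonal.
-/

open Matrix Filter Topology
open scoped MatrixOrder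

namespace PositiveLinearMap

variable {E : Type*} [AddCommGroup E] [PartialOrder E] [Module ℝ E]

theorem iterate_nonneg (T : E →ₚ[ℝ] E) {x : E} (hx : 0 ≤ x) (k : ℕ) : 0 ≤ T^[k] x := by
  induction k with
  | zero => exact hx
  | succ k ih => rw [Function.iterate_succ_apply']; exact T.map_nonneg ih

theorem iterate_le_smul_pow [PosSMulMono ℝ E] (T : E →ₚ[ℝ] E) {ξ x : E} {ρ c : ℝ}
    (hρ : 0 ≤ ρ) (hc : 0 ≤ c) (hξ : T ξ ≤ ρ • ξ) (hx : x ≤ c • ξ) (k : ℕ) :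
    T^[k] x ≤ (c * ρ ^ k) • ξ := by
  induction k with
  | zero => simpa using hx
  | succ k ih =>
    calc T^[k + 1] x = T (T^[k] x) := Function.iterate_succ_apply' _ _ _
      _ ≤ T ((c * ρ ^ k) • ξ) := OrderHomClass.mono T ih
      _ = (c * ρ ^ k) • T ξ := map_smul T _ _
      _ ≤ (c * ρ ^ k) • ρ • ξ := smul_le_smul_of_nonneg_left hξ (by positivity)
      _ = (c * ρ ^ (k + 1)) • ξ := by rw [smul_smul, pow_succ, mul_assoc]

end PositiveLinearMap

section ContinuousFunctionalCalculus

variable {A : Type*} [TopologicalSpace A] [Ring A] [StarRing A] [PartialOrder A]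
  [StarOrderedRing A] [Algebra ℝ A] [IsOrderedModule ℝ A] [NonnegSpectrumClass ℝ A]
  [ContinuousFunctionalCalculus ℝ A IsSelfAdjoint]

theorem IsStrictlyPositive.eventually_le_smul {a b : A} (ha : IsSelfAdjoint a)
    (hb : IsStrictlyPositive b) : ∀ᶠ c : ℝ in atTop, a ≤ c • b := by
  nontriviality A
  obtain ⟨r, hr, hrb⟩ :=
    (CFC.exists_pos_algebraMap_le_iff hb.isSelfAdjoint).2 fun x hx ↦ hb.spectrum_pos hx
  obtain ⟨s, hs⟩ := (ContinuousFunctionalCalculus.isCompact_spectrum (R := ℝ) a).bddAbove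
  filter_upwards [eventually_ge_atTop (s / r), eventually_ge_atTop 0] with c hc hc0
  calc a ≤ algebraMap ℝ A (c * r) :=
        le_algebraMap_of_spectrum_le (fun x hx ↦ (hs hx).trans ((div_le_iff₀ hr).1 hc)) ha
    _ = c • algebraMap ℝ A r := by rw [map_mul, Algebra.smul_def]
    _ ≤ c • b := smul_le_smul_of_nonneg_left hrb hc0

end ContinuousFunctionalCalculus

namespace Matrix

variable {m : Type*}

theorem PosSemidef.two_mul_abs_apply_le_s15 {S : Matrix m m ℝ} (hS : S.PosSemidef) (i j : m) :
    2 * |S i j| ≤ S i i + S j j := by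
  classical
  have hplus := hS.2 (.single i 1 + .single j 1)
  have hminus := hS.2 (.single i 1 - .single j 1)
  have hsym : S j i = S i j := hS.1.apply i j
  simp only [star_trivial, Finsupp.sum_add_index, Finsupp.sum_sub_index, Finsupp.sum_single_index,
    Finsupp.sum_add, Finsupp.sum_sub, mul_add, add_mul, mul_sub, sub_mul, mul_zero, zero_mul,
    mul_one, one_mul, hsym, implies_true] at hplus hminus
  cases abs_cases (S i j) <;> linarith

theorem tendsto_zero_of_nonneg_of_le_smul {ι : Type*} {l : Filter ι} {S : ι → Matrix m m ℝ}
    {r : ι → ℝ} {B : Matrix m m ℝ} (hS : ∀ k, 0 ≤ S k) (hSB : ∀ k, S k ≤ r k • B)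
    (hr : Tendsto r l (𝓝 0)) : Tendsto S l (𝓝 0) := by
  refine tendsto_pi_nhds.2 fun i ↦ tendsto_pi_nhds.2 fun j ↦ ?_
  have hdiag (k : ι) (p : m) : S k p p ≤ r k * B p p := by
    simpa [sub_nonneg] using (le_iff.1 (hSB k)).diag_nonneg (i := p)
  refine squeeze_zero_norm (fun k ↦ ?_) (by simpa using hr.mul_const ((B i i + B j j) / 2))
  have := (hS k).posSemidef.two_mul_abs_apply_le_s15 i j
  rw [Real.norm_eq_abs]
  linarith [hdiag k i, hdiag k j]

variable [Fintype m]

@[simps]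
def secondMoment (lam : ℝ) (A₀ A₁ : Matrix m m ℝ) : Matrix m m ℝ →ₗ[ℝ] Matrix m m ℝ where
  toFun X := lam • (A₁ * X * A₁ᵀ) + (1 - lam) • (A₀ * X * A₀ᵀ)
  map_add' X Y := by simp only [Matrix.mul_add, Matrix.add_mul, smul_add]; abel
  map_smul' c X := by
    simp only [Matrix.mul_smul, Matrix.smul_mul, smul_add, smul_comm c, RingHom.id_apply]

theorem secondMoment_nonneg {lam : ℝ} (hlam0 : 0 ≤ lam) (hlam1 : lam ≤ 1) (A₀ A₁ : Matrix m m ℝ)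
    {X : Matrix m m ℝ} (hX : 0 ≤ X) : 0 ≤ secondMoment lam A₀ A₁ X := by
  have hconj (A : Matrix m m ℝ) : 0 ≤ A * X * Aᵀ := by
    simpa using (hX.posSemidef.mul_mul_conjTranspose_same A).nonneg
  rw [secondMoment_apply]
  exact add_nonneg (smul_nonneg hlam0 (hconj A₁)) (smul_nonneg (sub_nonneg.2 hlam1) (hconj A₀))

end Matrix

/-- Mean-square stability: under a Lyapunov certificate for the second-moment operator
`𝓛(X) = λ A₁ X A₁ᵀ + (1-λ) A₀ X A₀ᵀ`, the iterates `𝓛^k(X)` of any positive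
semidefinite matrix converge to zero. -/
theorem stmt15 (n : ℕ) (A₀ A₁ : Matrix (Fin n) (Fin n) ℝ)
    (lam : ℝ) (hlam0 : 0 ≤ lam) (hlam1 : lam ≤ 1)
    (L : Matrix (Fin n) (Fin n) ℝ → Matrix (Fin n) (Fin n) ℝ)
    (hL : ∀ X, L X = lam • (A₁ * X * A₁ᵀ) + (1 - lam) • (A₀ * X * A₀ᵀ))
    (Ξ : Matrix (Fin n) (Fin n) ℝ) (hΞ : Ξ.PosDef) (hlyap : (Ξ - L Ξ).PosDef) :
    ∀ X : Matrix (Fin n) (Fin n) ℝ, X.PosSemidef →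
      Tendsto (fun k => L^[k] X) atTop (nhds 0) := by
  intro X hX
  let T : Matrix (Fin n) (Fin n) ℝ →ₚ[ℝ] Matrix (Fin n) (Fin n) ℝ :=
    .mk₀ (secondMoment lam A₀ A₁) fun _ ↦ secondMoment_nonneg hlam0 hlam1 A₀ A₁
  obtain rfl : L = T := funext fun X ↦ by rw [hL]; rfl
  obtain ⟨c₀, hΞc₀, hc₀⟩ := ((hlyap.isStrictlyPositive.eventually_le_smul
    hΞ.isStrictlyPositive.isSelfAdjoint).and (eventually_ge_atTop 1)).exists
  have hcontract : T Ξ ≤ (1 - c₀⁻¹) • Ξ := by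
    have := smul_le_smul_of_nonneg_left hΞc₀ (inv_nonneg.2 (zero_le_one.trans hc₀))
    rw [smul_smul, inv_mul_cancel₀ (by positivity), one_smul] at this
    rw [sub_smul, one_smul]
    exact le_sub_comm.1 this
  obtain ⟨c, hXc, hc⟩ := ((hΞ.isStrictlyPositive.eventually_le_smul
    (IsSelfAdjoint.of_nonneg hX.nonneg)).and (eventually_ge_atTop 0)).exists
  have hρ0 : 0 ≤ 1 - c₀⁻¹ := sub_nonneg.2 (inv_le_one_of_one_le₀ hc₀)
  have hρ1 : 1 - c₀⁻¹ < 1 := sub_lt_self _ (by positivity)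
  exact tendsto_zero_of_nonneg_of_le_smul (T.iterate_nonneg hX.nonneg)
    (T.iterate_le_smul_pow hρ0 hc hcontract hXc)
    (by simpa using (tendsto_pow_atTop_nhds_zero_of_lt_one hρ0 hρ1).const_mul c)
end
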